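/- Let V be a set of k ≥ 3 vertices among 1, …, n, let t = ⌊3k/2⌋ − 1, and perform the marking procedure: remove the smallest and largest elements, mark each remaining element whose residue mod t is unique among the remaining elements, then re-add the smallest element (marking it if its residue mod t is not already represented), then likewise the largest. If S(V) denotes the set of residues mod t present among elements of V and u(V) the number of unmarked elements, then |S(V)| + u(V) ≤ t. -/

import Mathlib

def SimpleGraph.power {V : Type*} (G : SimpleGraph V) (n : ℕ) : SimpleGraph V where
  Adj v w := 1 ≤ G.dist v w ∧ G.dist v w ≤ n
  symm := ⟨fun v w h => by (try simp only [] at h ⊢); rwa [SimpleGraph.dist_comm]⟩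
  loopless := ⟨fun v h => by simp [SimpleGraph.dist_self] at h⟩

/-- A graph is Hamilton-connected if every pair of distinct vertices is joined
by a Hamiltonian path. -/
def SimpleGraph.IsHamiltonConnected {V : Type*} [DecidableEq V] (G : SimpleGraph V) : Prop :=
  ∀ v w : V, v ≠ w → ∃ p : G.Walk v w, p.IsHamiltonian

/-- A graph is `k`-ordered if every sequence of `k` distinct vertices lies on a cycle
in the given cyclic order. -/
def SimpleGraph.IsKOrdered {V : Type*} (G : SimpleGraph V) (k : ℕ) : Prop :=
  ∀ v : Fin k → V, Function.Injective v →
    ∃ (a : V) (c : G.Walk a a), c.IsCycle ∧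
      ∃ t : Fin k → ℕ, StrictMono t ∧ (∀ i, t i < c.length) ∧ ∀ i, c.getVert (t i) = v i

/-- A graph is `k`-ordered Hamiltonian if every sequence of `k` distinct vertices lies on a
Hamiltonian cycle in the given cyclic order. -/
def SimpleGraph.IsKOrderedHamiltonian {V : Type*} [DecidableEq V] (G : SimpleGraph V) (k : ℕ) :
    Prop :=
  ∀ v : Fin k → V, Function.Injective v →
    ∃ (a : V) (c : G.Walk a a), c.IsHamiltonianCycle ∧
      ∃ t : Fin k → ℕ, StrictMono t ∧ (∀ i, t i < c.length) ∧ ∀ i, c.getVert (t i) = v i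

theorem stmt_8 (k n t : ℕ) (hk : 3 ≤ k) (ht : t = 3 * k / 2 - 1)
    (V : Finset ℕ) (hVn : V ⊆ Finset.Icc 1 n) (hcard : V.card = k) :
    ∀ l r : ℕ, l = V.min' (Finset.card_pos.mp (by omega)) →
      r = V.max' (Finset.card_pos.mp (by omega)) →
      ∀ M : Finset ℕ,
        M = (((V.erase l).erase r).filter
              (fun v => ∀ u ∈ (V.erase l).erase r, u ≠ v → u % t ≠ v % t))
            ∪ (if ∀ u ∈ (V.erase l).erase r, u % t ≠ l % t then {l} else ∅)
            ∪ (if ∀ u ∈ ((V.erase l).erase r) ∪ {l}, u % t ≠ r % t then {r} else ∅) →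
        (V.image (· % t)).card + (V.card - M.card) ≤ t := by
  intro l r hl hr M hM
  have hV1 : 1 < V.card := by omega
  have hlV : l ∈ V := by rw [hl]; exact V.min'_mem _
  have hrV : r ∈ V := by rw [hr]; exact V.max'_mem _
  have hlr : l ≠ r := by
    have := Finset.min'_lt_max'_of_card V hV1
    rw [← hl, ← hr] at this; omega
  set W : Finset ℕ := (V.erase l).erase r with hW
  have hWl : l ∉ W := by
    intro h
    exact Finset.notMem_erase l V (Finset.mem_of_mem_erase h)
  have hWr : r ∉ W := Finset.notMem_erase _ _
  have hrl : r ∈ V.erase l := Finset.mem_erase.mpr ⟨fun h => hlr h.symm, hrV⟩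
  have hWcard : W.card = k - 2 := by
    rw [hW, Finset.card_erase_of_mem hrl, Finset.card_erase_of_mem hlV, hcard]
    omega
  have hVeq : insert l (insert r W) = V := by
    rw [hW, Finset.insert_erase hrl, Finset.insert_erase hlV]
  set SW : Finset ℕ := W.image (· % t) with hSWdef
  set U1 : Finset ℕ := SW.filter (fun c => (W.filter (fun v => v % t = c)).card = 1) with hU1
  set U2 : Finset ℕ := SW.filter (fun c => ¬ (W.filter (fun v => v % t = c)).card = 1) with hU2
  -- fiber sum
  have hfibpos : ∀ c ∈ SW, 1 ≤ (W.filter (fun v => v % t = c)).card := by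
    intro c hc
    obtain ⟨v, hv, hvc⟩ := Finset.mem_image.mp hc
    exact Finset.card_pos.mpr ⟨v, Finset.mem_filter.mpr ⟨hv, hvc⟩⟩
  have hsum2 : U1.card + 2 * U2.card ≤ k - 2 := by
    have hdis : Disjoint U1 U2 := Finset.disjoint_filter_filter_not SW SW _
    have hun : U1 ∪ U2 = SW := Finset.filter_union_filter_not_eq _ SW
    have h1 : ∑ c ∈ U1, (W.filter (fun v => v % t = c)).card = U1.card := by
      rw [Finset.sum_congr rfl (fun c hc => (Finset.mem_filter.mp hc).2)]
      simp [hU1]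
    have h2 : 2 * U2.card ≤ ∑ c ∈ U2, (W.filter (fun v => v % t = c)).card := by
      have := Finset.card_nsmul_le_sum U2 (fun c => (W.filter (fun v => v % t = c)).card) 2
        (fun c hc => by
          rw [hU2, Finset.mem_filter] at hc
          have h := hfibpos c hc.1
          show 2 ≤ (W.filter (fun v => v % t = c)).card
          omega)
      simpa [smul_eq_mul, mul_comm] using this
    have htot : ∑ c ∈ SW, (W.filter (fun v => v % t = c)).card = W.card :=
      (Finset.card_eq_sum_card_image _ _).symm
    rw [← hun, Finset.sum_union hdis, h1] at htot
    omega
  -- marked core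
  set Mw : Finset ℕ := W.filter (fun v => ∀ u ∈ W, u ≠ v → u % t ≠ v % t) with hMwdef
  have hMwW : Mw ⊆ W := Finset.filter_subset _ _
  have hMwcard : Mw.card = U1.card := by
    have himg : Mw.image (· % t) = U1 := by
      ext c
      rw [hU1, hMwdef]
      simp only [Finset.mem_image, Finset.mem_filter]
      constructor
      · rintro ⟨v, ⟨hvW, hvu⟩, rfl⟩
        refine ⟨Finset.mem_image.mpr ⟨v, hvW, rfl⟩, ?_⟩
        have hfib : W.filter (fun u => u % t = v % t) = {v} := by
          ext u
          simp only [Finset.mem_filter, Finset.mem_singleton]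
          constructor
          · rintro ⟨huW, huv⟩
            by_contra hne
            exact hvu u huW hne huv
          · rintro rfl
            exact ⟨hvW, rfl⟩
        rw [hfib, Finset.card_singleton]
      · rintro ⟨hcSW, hcard1⟩
        obtain ⟨v, hv⟩ := Finset.card_eq_one.mp hcard1
        have hvmem : v ∈ W.filter (fun u => u % t = c) := by
          rw [hv]; exact Finset.mem_singleton_self v
        obtain ⟨hvW, hvc⟩ := Finset.mem_filter.mp hvmem
        refine ⟨v, ⟨hvW, ?_⟩, hvc⟩
        intro u huW hne huv
        have hmem2 : u ∈ W.filter (fun u => u % t = c) :=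
          Finset.mem_filter.mpr ⟨huW, by rw [huv, hvc]⟩
        rw [hv, Finset.mem_singleton] at hmem2
        exact hne hmem2
    rw [← himg]
    rw [Finset.card_image_of_injOn]
    intro v1 h1 v2 h2 heq
    rw [Finset.mem_coe, hMwdef, Finset.mem_filter] at h1 h2
    by_contra hne
    exact h2.2 v1 h1.1 hne heq
  -- relate if conditions to membership
  have hIl : (∀ u ∈ W, u % t ≠ l % t) ↔ l % t ∉ SW := by
    rw [hSWdef]
    simp only [Finset.mem_image, not_exists]
    constructor
    · rintro h u ⟨hu, he⟩
      exact h u hu he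
    · intro h u hu he
      exact h u ⟨hu, he⟩
  have hIr : (∀ u ∈ W ∪ {l}, u % t ≠ r % t) ↔ r % t ∉ insert (l % t) SW := by
    simp only [hSWdef, Finset.mem_insert, Finset.mem_image, Finset.mem_union,
      Finset.mem_singleton]
    constructor
    · intro h hmem
      rcases hmem with h1 | ⟨u, hu, he⟩
      · exact h l (Or.inr rfl) h1.symm
      · exact h u (Or.inl hu) he
    · intro h u hu he
      rcases hu with hu | rfl
      · exact h (Or.inr ⟨u, hu, he⟩)
      · exact h (Or.inl he.symm)
  have hMwM : Mw ⊆ M := by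
    rw [hM]
    exact Finset.Subset.trans Finset.subset_union_left Finset.subset_union_left
  have hlM : l % t ∉ SW → l ∈ M := by
    intro h
    rw [hM]
    apply Finset.mem_union_left
    apply Finset.mem_union_right
    rw [if_pos (hIl.mpr h)]
    exact Finset.mem_singleton_self l
  have hrM : r % t ∉ insert (l % t) SW → r ∈ M := by
    intro h
    rw [hM]
    apply Finset.mem_union_right
    rw [if_pos (hIr.mpr h)]
    exact Finset.mem_singleton_self r
  -- obtain el, er
  obtain ⟨el, er, hel1, her1, hS', hM'⟩ :
      ∃ el er : ℕ, el ≤ 1 ∧ er ≤ 1 ∧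
        (V.image (· % t)).card ≤ U1.card + U2.card + el + er ∧
        U1.card + el + er ≤ M.card := by
    have hSWcard : SW.card = U1.card + U2.card := by
      rw [← Finset.card_filter_add_card_filter_not
        (s := SW) (p := fun c => (W.filter (fun v => v % t = c)).card = 1)]
    have hSimg : V.image (· % t) = insert (r % t) (insert (l % t) SW) := by
      rw [← hVeq, Finset.image_insert, Finset.image_insert, Finset.insert_comm]
    by_cases h1 : l % t ∈ SW
    · by_cases h2 : r % t ∈ insert (l % t) SW
      · refine ⟨0, 0, by norm_num, by norm_num, ?_, ?_⟩
        · rw [hSimg, Finset.insert_eq_self.mpr h2, Finset.insert_eq_self.mpr h1]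
          omega
        · have := Finset.card_le_card hMwM
          omega
      · refine ⟨0, 1, by norm_num, by norm_num, ?_, ?_⟩
        · rw [hSimg, Finset.card_insert_of_notMem h2, Finset.insert_eq_self.mpr h1]
          omega
        · have : insert r Mw ⊆ M := Finset.insert_subset (hrM h2) hMwM
          have hc := Finset.card_le_card this
          rw [Finset.card_insert_of_notMem (fun hx => hWr (hMwW hx))] at hc
          omega
    · by_cases h2 : r % t ∈ insert (l % t) SW
      · refine ⟨1, 0, by norm_num, by norm_num, ?_, ?_⟩
        · rw [hSimg, Finset.insert_eq_self.mpr h2, Finset.card_insert_of_notMem h1]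
          omega
        · have : insert l Mw ⊆ M := Finset.insert_subset (hlM h1) hMwM
          have hc := Finset.card_le_card this
          rw [Finset.card_insert_of_notMem (fun hx => hWl (hMwW hx))] at hc
          omega
      · refine ⟨1, 1, by norm_num, by norm_num, ?_, ?_⟩
        · rw [hSimg, Finset.card_insert_of_notMem h2, Finset.card_insert_of_notMem h1]
          omega
        · have : insert r (insert l Mw) ⊆ M :=
            Finset.insert_subset (hrM h2) (Finset.insert_subset (hlM h1) hMwM)
          have hc := Finset.card_le_card this
          have hrn : r ∉ insert l Mw := by
            simp only [Finset.mem_insert]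
            rintro (rfl | hx)
            · exact hlr rfl
            · exact hWr (hMwW hx)
          rw [Finset.card_insert_of_notMem hrn,
            Finset.card_insert_of_notMem (fun hx => hWl (hMwW hx))] at hc
          omega
  rw [hcard]
  omega
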